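/- n-step cut-off under-approximation (finite-horizon form of the paper's Lemma on under-approximative value functions): in a POMDP with reward function R and observable goal set G, for every observation-based policy σ, every n ∈ ℕ, and every belief b over S with an observation, ∑_{s∈S} b(s)·W_n^σ(s) ≤ V_n(b). -/

import Mathlib

open Finset

attribute [local instance] Classical.propDecidable

noncomputable section

/-- A belief over a finite type `S`: a nonnegative function summing to one. -/
def IsBelief {S : Type} [Fintype S] (b : S → ℝ) : Prop :=
  (∀ s, 0 ≤ b s) ∧ (∑ s, b s = 1)

/-- A belief clip for a belief `b`: `0 ≤ μ(s) ≤ b(s)` pointwise and `Σμ < 1`. -/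
def IsBeliefClip {S : Type} [Fintype S] (b μ : S → ℝ) : Prop :=
  (∀ s, 0 ≤ μ s ∧ μ s ≤ b s) ∧ (∑ s, μ s < 1)

/-- The induced function `b ⊖ μ`, defined by `(b ⊖ μ)(s) = (b(s) − μ(s)) / (1 − Σμ)`. -/
def clipped {S : Type} [Fintype S] (b μ : S → ℝ) : S → ℝ :=
  fun s => (b s - μ s) / (1 - ∑ s', μ s')

variable {S Act Z : Type}

/-- The set of actions enabled in state `s`: those whose outgoing probabilities sum to 1. -/
def enabledA [Fintype S] [Fintype Act] (P : S → Act → S → ℝ) (s : S) : Finset Act :=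
  univ.filter fun α => ∑ s' : S, P s α s' = 1

/-- The actions enabled at an observation `z`: `Act(z) = Act(s)` for some `s` with `O s = z`. -/
def obsEnabled [Fintype S] [Fintype Act] (O : S → Z) (P : S → Act → S → ℝ) (z : Z) :
    Finset Act :=
  if h : ∃ s, O s = z then enabledA P h.choose else ∅

/-- The POMDP assumptions on the observation function `O` and the transition function `P`:
nonnegative transition probabilities, each state-action row sums to 0 or 1, every state has
some enabled action, and equally-observed states have equal enabled actions. -/
def IsPOMDP [Fintype S] [Fintype Act] (O : S → Z) (P : S → Act → S → ℝ) : Prop :=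
  (∀ s α s', 0 ≤ P s α s') ∧
  (∀ s α, (∑ s', P s α s') = 0 ∨ (∑ s', P s α s') = 1) ∧
  (∀ s, (enabledA P s).Nonempty) ∧
  (∀ s s', O s = O s' → enabledA P s = enabledA P s')

/-- `b` has observation `z`: the support of `b` is contained in `O⁻¹(z)`. -/
def HasObs (O : S → Z) (b : S → ℝ) (z : Z) : Prop :=
  ∀ s, 0 < b s → O s = z

/-- `P(s,α,z)`: probability to observe `z` after taking `α` in state `s`. -/
def Pso [Fintype S] (O : S → Z) (P : S → Act → S → ℝ) (s : S) (α : Act) (z : Z) : ℝ :=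
  ∑ s' : S, if O s' = z then P s α s' else 0

/-- `P(b,α,z)`: probability to observe `z` after taking `α` in belief `b`. -/
def Pbo [Fintype S] (O : S → Z) (P : S → Act → S → ℝ) (b : S → ℝ) (α : Act) (z : Z) : ℝ :=
  ∑ s : S, b s * Pso O P s α z

/-- The successor belief `⟦b|α,z⟧`. -/
def succB [Fintype S] (O : S → Z) (P : S → Act → S → ℝ) (b : S → ℝ) (α : Act) (z : Z) :
    S → ℝ :=
  fun s => if O s = z then (∑ s' : S, b s' * P s' α s) / Pbo O P b α z else 0

/-- The belief reward `R(b,α,z)`. -/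
def Rbel [Fintype S] (O : S → Z) (P R : S → Act → S → ℝ) (b : S → ℝ) (α : Act) (z : Z) : ℝ :=
  (∑ s : S, b s * ∑ s' : S, if O s' = z then R s α s' * P s α s' else 0) / Pbo O P b α z

/-- The last observation of a finite observation trace `z₀ α₁ z₁ … αₙ zₙ`,
represented as the pair of `z₀` and the list `[(α₁,z₁),…,(αₙ,zₙ)]`. -/
def lastObs (τ : Z × List (Act × Z)) : Z :=
  (τ.2.getLast?.map Prod.snd).getD τ.1

/-- An observation-based policy: to each finite observation trace it assigns a probability
distribution over actions supported on the actions enabled at the last observation. -/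
def IsObsPolicy [Fintype S] [Fintype Act] (O : S → Z) (P : S → Act → S → ℝ)
    (σ : Z × List (Act × Z) → Act → ℝ) : Prop :=
  ∀ τ, (∀ α, 0 ≤ σ τ α) ∧ (∑ α, σ τ α = 1) ∧
    (∀ α, σ τ α ≠ 0 → ∀ s, O s = lastObs τ → α ∈ enabledA P s)

/-- The shifted policy `σ⇝(z,α)`, behaving as `σ` after observing `z` and taking `α`. -/
def shiftPol (σ : Z × List (Act × Z) → Act → ℝ) (z : Z) (α : Act) :
    Z × List (Act × Z) → Act → ℝ :=
  fun τ => σ (z, (α, τ.1) :: τ.2)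

/-- Goal states are observable: membership in `G` is determined by the observation. -/
def ObservableGoal (O : S → Z) (G : Set S) : Prop :=
  ∃ Z' : Set Z, ∀ s, s ∈ G ↔ O s ∈ Z'

/-- The `n`-step state values `W_n^σ` under an observation-based policy `σ`. -/
def Wval [Fintype S] [Fintype Act] (O : S → Z) (P R : S → Act → S → ℝ) (G : Set S) :
    ℕ → (Z × List (Act × Z) → Act → ℝ) → S → ℝ
  | 0, _, _ => 0
  | n+1, σ, s =>
    if s ∈ G then 0
    else ∑ α ∈ enabledA P s, σ (O s, []) α *
      ∑ s' : S, P s α s' * (R s α s' + Wval O P R G n (shiftPol σ (O s) α) s')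

/-- The `n`-step belief values `V_n^σ(b)` under policy `σ`, for a belief `b` with
observation `z`. -/
def Vpol [Fintype S] [Fintype Act] [Fintype Z] (O : S → Z) (P R : S → Act → S → ℝ)
    (G : Set S) :
    ℕ → (Z × List (Act × Z) → Act → ℝ) → (S → ℝ) → Z → ℝ
  | 0, _, _, _ => 0
  | n+1, σ, b, z =>
    if ∀ s, 0 < b s → s ∈ G then 0
    else ∑ α ∈ obsEnabled O P z, σ (z, []) α *
      ∑ z' ∈ univ.filter (fun z' => 0 < Pbo O P b α z'),
        Pbo O P b α z' *
          (Rbel O P R b α z' + Vpol O P R G n (shiftPol σ z α) (succB O P b α z') z')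

/-- Maximum of `f` over a finite set (0 for the empty set). -/
def maxOver {α : Type} (t : Finset α) (f : α → ℝ) : ℝ :=
  if h : t.Nonempty then t.sup' h f else 0

/-- Minimum of `f` over a finite set (0 for the empty set). -/
def minOver {α : Type} (t : Finset α) (f : α → ℝ) : ℝ :=
  if h : t.Nonempty then t.inf' h f else 0

/-- The `n`-step optimal belief values `V_n(b)`, for a belief `b` with observation `z`. -/
def Vopt [Fintype S] [Fintype Act] [Fintype Z] (O : S → Z) (P R : S → Act → S → ℝ)
    (G : Set S) :
    ℕ → (S → ℝ) → Z → ℝ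
  | 0, _, _ => 0
  | n+1, b, z =>
    if ∀ s, 0 < b s → s ∈ G then 0
    else maxOver (obsEnabled O P z) fun α =>
      ∑ z' ∈ univ.filter (fun z' => 0 < Pbo O P b α z'),
        Pbo O P b α z' * (Rbel O P R b α z' + Vopt O P R G n (succB O P b α z') z')

/-- The `n`-step minimal values `U_n` on the underlying fully observable MDP. -/
def Umin [Fintype S] [Fintype Act] (P R : S → Act → S → ℝ) (G : Set S) : ℕ → S → ℝ
  | 0, _ => 0
  | n+1, s =>
    if s ∈ G then 0
    else minOver (enabledA P s) fun α =>
      ∑ s' : S, P s α s' * (R s α s' + Umin P R G n s')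

end

/-! Induction on `n`, generalizing the policy and the belief. Outside the goal, the `b`-average
of `W_{n+1}^σ` is the `σ(z)`-weighted average, over the enabled actions `α`, of the one-step
expected value under `b`. Splitting that expectation by the next observation `z'` rewrites it as
`∑_{z'} P(b,α,z') · (R(b,α,z') + ∑_s ⟦b|α,z'⟧(s) · W_n^{σ⇝(z,α)}(s))`, to which the induction
hypothesis applies termwise; a weighted average is at most the maximum over `α`. -/

variable {S Act Z : Type}

theorem ObservableGoal.notMem_of_obs_eq {O : S → Z} {G : Set S} (hG : ObservableGoal O G)
    {s s' : S} (hO : O s = O s') (hs : s ∉ G) : s' ∉ G := by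
  obtain ⟨Z', hZ'⟩ := hG
  rw [hZ'] at hs ⊢
  rwa [← hO]

theorem lastObs_cons (z : Z) (α : Act) (τ : Z × List (Act × Z)) :
    lastObs (z, (α, τ.1) :: τ.2) = lastObs τ := by
  obtain ⟨z₀, _ | ⟨step, l⟩⟩ := τ
  · rfl
  · simp [lastObs, List.getLast?_eq_some_getLast]

variable [Fintype S]

theorem Pso_nonneg {O : S → Z} {P : S → Act → S → ℝ} (hP : ∀ s α s', 0 ≤ P s α s')
    (s : S) (α : Act) (z : Z) : 0 ≤ Pso O P s α z :=
  sum_nonneg fun s' _ => by split_ifs <;> simp [hP]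

theorem Pbo_eq_sum_sum (O : S → Z) (P : S → Act → S → ℝ) (b : S → ℝ) (α : Act) (z : Z) :
    Pbo O P b α z = ∑ s, ∑ s', if O s' = z then b s * P s α s' else 0 := by
  simp only [Pbo, Pso, mul_sum, mul_ite, mul_zero]

theorem mul_eq_zero_of_Pbo_eq_zero {O : S → Z} {P : S → Act → S → ℝ}
    (hP : ∀ s α s', 0 ≤ P s α s') {b : S → ℝ} (hb : ∀ s, 0 ≤ b s) {α : Act} {z : Z}
    (h : Pbo O P b α z = 0) (s : S) {s' : S} (hs' : O s' = z) : b s * P s α s' = 0 := by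
  have hnonneg : ∀ s s', 0 ≤ if O s' = z then b s * P s α s' else 0 := fun s s' => by
    split_ifs <;> simp [mul_nonneg, hb, hP]
  rw [Pbo_eq_sum_sum, sum_eq_zero_iff_of_nonneg fun s _ => sum_nonneg fun s' _ => hnonneg s s']
    at h
  simpa [hs'] using (sum_eq_zero_iff_of_nonneg fun s' _ => hnonneg s s').1 (h s (mem_univ _)) s'
    (mem_univ _)

theorem Pbo_nonneg {O : S → Z} {P : S → Act → S → ℝ} (hP : ∀ s α s', 0 ≤ P s α s')
    {b : S → ℝ} (hb : ∀ s, 0 ≤ b s) (α : Act) (z : Z) : 0 ≤ Pbo O P b α z :=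
  sum_nonneg fun s _ => mul_nonneg (hb s) (Pso_nonneg hP s α z)

theorem succB_nonneg {O : S → Z} {P : S → Act → S → ℝ} (hP : ∀ s α s', 0 ≤ P s α s')
    {b : S → ℝ} (hb : ∀ s, 0 ≤ b s) (α : Act) (z : Z) (s : S) : 0 ≤ succB O P b α z s := by
  unfold succB
  split_ifs
  · exact div_nonneg (sum_nonneg fun s' _ => mul_nonneg (hb s') (hP s' α s)) (Pbo_nonneg hP hb α z)
  · exact le_rfl

theorem hasObs_succB (O : S → Z) (P : S → Act → S → ℝ) (b : S → ℝ) (α : Act) (z : Z) :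
    HasObs O (succB O P b α z) z := by
  intro s hs
  by_contra hne
  simp [succB, hne] at hs

theorem Pbo_mul_Rbel {O : S → Z} {P : S → Act → S → ℝ} (R : S → Act → S → ℝ) {b : S → ℝ}
    {α : Act} {z : Z} (h : Pbo O P b α z ≠ 0) :
    Pbo O P b α z * Rbel O P R b α z =
      ∑ s, b s * ∑ s', if O s' = z then R s α s' * P s α s' else 0 :=
  mul_div_cancel₀ _ h

theorem Pbo_mul_sum_succB_mul {O : S → Z} {P : S → Act → S → ℝ} {b : S → ℝ} {α : Act} {z : Z}
    (h : Pbo O P b α z ≠ 0) (W : S → ℝ) :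
    Pbo O P b α z * ∑ s', succB O P b α z s' * W s' =
      ∑ s, b s * ∑ s', if O s' = z then P s α s' * W s' else 0 := by
  simp only [succB, mul_sum, ite_mul, zero_mul, mul_ite, mul_zero]
  rw [sum_comm]
  refine sum_congr rfl fun s' _ => ?_
  split_ifs
  · rw [← mul_assoc, mul_div_cancel₀ _ h, sum_mul]
    exact sum_congr rfl fun s _ => by ring
  · simp

theorem sum_mul_sum_eq_sum_succB [Fintype Z] (O : S → Z) {P : S → Act → S → ℝ}
    (hP : ∀ s α s', 0 ≤ P s α s') (R : S → Act → S → ℝ) {b : S → ℝ} (hb : ∀ s, 0 ≤ b s)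
    (α : Act) (W : S → ℝ) :
    ∑ s, b s * ∑ s', P s α s' * (R s α s' + W s') =
      ∑ z ∈ univ.filter (fun z => 0 < Pbo O P b α z),
        Pbo O P b α z * (Rbel O P R b α z + ∑ s', succB O P b α z s' * W s') := by
  have hobsTerm : ∀ z, (∑ s, b s * ∑ s', if O s' = z then P s α s' * (R s α s' + W s') else 0) =
      if 0 < Pbo O P b α z then
        Pbo O P b α z * (Rbel O P R b α z + ∑ s', succB O P b α z s' * W s') else 0 := by
    intro z
    split_ifs with hpos
    · rw [mul_add, Pbo_mul_Rbel R hpos.ne', Pbo_mul_sum_succB_mul hpos.ne', ← sum_add_distrib]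
      refine sum_congr rfl fun s _ => ?_
      rw [← mul_add, ← sum_add_distrib]
      congr 1
      exact sum_congr rfl fun s' _ => by split_ifs <;> ring
    · have hzero : Pbo O P b α z = 0 :=
        le_antisymm (not_lt.1 hpos)
          (sum_nonneg fun s _ => mul_nonneg (hb s) (Pso_nonneg hP s α z))
      refine sum_eq_zero fun s _ => ?_
      rw [mul_sum]
      refine sum_eq_zero fun s' _ => ?_
      split_ifs with hs'
      · rw [← mul_assoc, mul_eq_zero_of_Pbo_eq_zero hP hb hzero s hs', zero_mul]
      · exact mul_zero _
  rw [sum_filter, ← sum_congr rfl fun z _ => hobsTerm z, sum_comm]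
  refine sum_congr rfl fun s _ => ?_
  rw [← mul_sum, sum_comm]
  simp

theorem IsObsPolicy.shiftPol [Fintype Act] {O : S → Z} {P : S → Act → S → ℝ}
    {σ : Z × List (Act × Z) → Act → ℝ} (hσ : IsObsPolicy O P σ) (z : Z) (α : Act) :
    IsObsPolicy O P (shiftPol σ z α) := fun τ => by
  obtain ⟨hnonneg, hsum, hsupp⟩ := hσ (z, (α, τ.1) :: τ.2)
  rw [lastObs_cons] at hsupp
  exact ⟨hnonneg, hsum, hsupp⟩

theorem IsObsPolicy.sum_enabledA_eq_one [Fintype Act] {O : S → Z} {P : S → Act → S → ℝ}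
    {σ : Z × List (Act × Z) → Act → ℝ} (hσ : IsObsPolicy O P σ) {s : S} (z : Z)
    (hs : O s = z) : ∑ α ∈ enabledA P s, σ (z, []) α = 1 := by
  obtain ⟨-, hsum, hsupp⟩ := hσ (z, [])
  rw [← hsum]
  exact sum_subset (subset_univ _) fun α _ hα => by_contra fun hne => hα (hsupp α hne s hs)

theorem obsEnabled_eq_enabledA [Fintype Act] {O : S → Z} {P : S → Act → S → ℝ}
    (hPobs : ∀ s s', O s = O s' → enabledA P s = enabledA P s') {s : S} {z : Z}
    (hs : O s = z) : obsEnabled O P z = enabledA P s := by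
  have hex : ∃ s, O s = z := ⟨s, hs⟩
  rw [obsEnabled, dif_pos hex]
  exact hPobs _ _ (hex.choose_spec.trans hs.symm)

theorem sum_mul_le_maxOver {ι : Type} {t : Finset ι} {w f : ι → ℝ} (hw : ∀ i, 0 ≤ w i)
    (hsum : ∑ i ∈ t, w i = 1) : ∑ i ∈ t, w i * f i ≤ maxOver t f := by
  have ht : t.Nonempty := nonempty_of_sum_ne_zero (hsum.trans_ne one_ne_zero)
  rw [maxOver, dif_pos ht]
  calc ∑ i ∈ t, w i * f i ≤ ∑ i ∈ t, w i * t.sup' ht f :=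
        sum_le_sum fun i hi => mul_le_mul_of_nonneg_left (le_sup' f hi) (hw i)
    _ = t.sup' ht f := by rw [← sum_mul, hsum, one_mul]

theorem sum_mul_Wval_succ [Fintype Act] {O : S → Z} {P : S → Act → S → ℝ}
    (hPobs : ∀ s s', O s = O s' → enabledA P s = enabledA P s') (R : S → Act → S → ℝ)
    {G : Set S} (n : ℕ) (σ : Z × List (Act × Z) → Act → ℝ) {b : S → ℝ} (hb : ∀ s, 0 ≤ b s)
    {z : Z} (hobs : HasObs O b z) (hG : ∀ s, 0 < b s → s ∉ G) {s₀ : S} (hs₀ : O s₀ = z) :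
    ∑ s, b s * Wval O P R G (n + 1) σ s =
      ∑ α ∈ enabledA P s₀, σ (z, []) α *
        ∑ s, b s * ∑ s', P s α s' * (R s α s' + Wval O P R G n (shiftPol σ z α) s') := by
  have hterm : ∀ s, b s * Wval O P R G (n + 1) σ s = ∑ α ∈ enabledA P s₀, σ (z, []) α *
      (b s * ∑ s', P s α s' * (R s α s' + Wval O P R G n (shiftPol σ z α) s')) := fun s => by
    rcases (hb s).eq_or_lt with hzero | hpos
    · simp [← hzero]
    · have hOs : O s = z := hobs s hpos
      rw [Wval, if_neg (hG s hpos), hOs, hPobs s s₀ (hOs.trans hs₀.symm), mul_sum]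
      exact sum_congr rfl fun α _ => by ring
  rw [sum_congr rfl fun s _ => hterm s, sum_comm]
  exact sum_congr rfl fun α _ => (mul_sum _ _ _).symm

theorem sum_mul_Wval_le_Vopt [Fintype Act] [Fintype Z] {O : S → Z} {P : S → Act → S → ℝ}
    (hP : ∀ s α s', 0 ≤ P s α s') (hPobs : ∀ s s', O s = O s' → enabledA P s = enabledA P s')
    (R : S → Act → S → ℝ) {G : Set S} (hG : ObservableGoal O G) (n : ℕ)
    {σ : Z × List (Act × Z) → Act → ℝ} (hσ : IsObsPolicy O P σ) {b : S → ℝ}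
    (hb : ∀ s, 0 ≤ b s) {z : Z} (hobs : HasObs O b z) :
    ∑ s, b s * Wval O P R G n σ s ≤ Vopt O P R G n b z := by
  induction n generalizing σ b z with
  | zero => simp [Wval, Vopt]
  | succ n ih =>
    by_cases hgoal : ∀ s, 0 < b s → s ∈ G
    · rw [Vopt, if_pos hgoal]
      refine (sum_eq_zero fun s _ => ?_).le
      rcases (hb s).eq_or_lt with hzero | hpos
      · rw [← hzero, zero_mul]
      · rw [Wval, if_pos (hgoal s hpos), mul_zero]
    · rw [Vopt, if_neg hgoal]
      push Not at hgoal
      obtain ⟨s₀, hs₀b, hs₀G⟩ := hgoal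
      have hs₀ : O s₀ = z := hobs s₀ hs₀b
      have hnotGoal : ∀ s, 0 < b s → s ∉ G := fun s hs =>
        hG.notMem_of_obs_eq (hs₀.trans (hobs s hs).symm) hs₀G
      rw [sum_mul_Wval_succ hPobs R n σ hb hobs hnotGoal hs₀, obsEnabled_eq_enabledA hPobs hs₀]
      have hact : ∀ α,
          ∑ s, b s * ∑ s', P s α s' * (R s α s' + Wval O P R G n (shiftPol σ z α) s') ≤
            ∑ z' ∈ univ.filter (fun z' => 0 < Pbo O P b α z'),
              Pbo O P b α z' * (Rbel O P R b α z' + Vopt O P R G n (succB O P b α z') z') :=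
        fun α => by
          rw [sum_mul_sum_eq_sum_succB O hP R hb]
          refine sum_le_sum fun z' hz' => mul_le_mul_of_nonneg_left (add_le_add le_rfl ?_)
            (mem_filter.1 hz').2.le
          exact ih (hσ.shiftPol z α) (succB_nonneg hP hb α z') (hasObs_succB O P b α z')
      exact (sum_le_sum fun α _ => mul_le_mul_of_nonneg_left (hact α) ((hσ _).1 α)).trans
        (sum_mul_le_maxOver (fun α => (hσ _).1 α) (hσ.sum_enabledA_eq_one z hs₀))

theorem stmt_15_general {S Act Z : Type} [Fintype S] [Fintype Act]
    [Fintype Z]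
    (O : S → Z) (P : S → Act → S → ℝ) (hM : IsPOMDP O P)
    (R : S → Act → S → ℝ) (G : Set S) (hG : ObservableGoal O G)
    (σ : Z × List (Act × Z) → Act → ℝ) (hσ : IsObsPolicy O P σ) (n : ℕ)
    (b : S → ℝ) (z : Z) (hb : IsBelief b) (hobs : HasObs O b z) :
    ∑ s, b s * Wval O P R G n σ s ≤ Vopt O P R G n b z :=
  sum_mul_Wval_le_Vopt hM.1 hM.2.2.2 R hG n hσ hb.1 hobs

/-- `n`-step cut-off under-approximation:
`∑_s b(s)·W_n^σ(s) ≤ V_n(b)`. -/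
theorem stmt_15 {S Act Z : Type} [Fintype S] [Nonempty S] [Fintype Act] [Nonempty Act]
    [Fintype Z] [Nonempty Z]
    (O : S → Z) (P : S → Act → S → ℝ) (hM : IsPOMDP O P)
    (R : S → Act → S → ℝ) (G : Set S) (hG : ObservableGoal O G)
    (σ : Z × List (Act × Z) → Act → ℝ) (hσ : IsObsPolicy O P σ) (n : ℕ)
    (b : S → ℝ) (z : Z) (hb : IsBelief b) (hobs : HasObs O b z) :
    ∑ s, b s * Wval O P R G n σ s ≤ Vopt O P R G n b z :=
  stmt_15_general O P hM R G hG σ hσ n b z hb hobs
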